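/- arXiv:1912.00593 — 2 statements merged into one kernel-verified Lean document; each statement's English description precedes it below -/
import Mathlib

section
/- Let v, b ∈ ℂ^n with b_j ≠ 0 for every j, and let u, u' ∈ ℤ^n. Set I₀ = nsupp(v), I = nsupp(v+u), and J = nsupp(v+u−u'). Then, as an equation of integers, ord_s([v+sb]_{u₋} · [v+u+sb]_{u'₊}) − ord_s([v+u+sb]_{u₊}) = |I ∪ J| − |I₀|. (This is the order computation of equation (12) in the proof of Theorem 5.4: the coefficient a_u(s)·[v+sb+u]_{u'₊} arising from ∂^{u'₊} applied to a_u(s)x^{v+sb+u} has order |I_u ∪ J| − |I₀| in s.) -/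
open scoped Classical

/-- The negative support of `v`: indices where `v i` is a negative integer. -/
noncomputable def nsupp {n : ℕ} (v : Fin n → ℂ) : Finset (Fin n) :=
  Finset.univ.filter (fun i => ∃ m : ℤ, m < 0 ∧ v i = (m : ℂ))

/-- The falling factorial `[v]_u = ∏_i ∏_{k=0}^{u_i - 1} (v_i - k)`. -/
noncomputable def ffall {n : ℕ} (v : Fin n → ℂ) (u : Fin n → ℕ) : ℂ :=
  ∏ i, ∏ k ∈ Finset.range (u i), (v i - (k : ℂ))

/-- The reduced falling factorial: the product of the nonzero factors of `[v]_u`. -/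
noncomputable def redffall {n : ℕ} (v : Fin n → ℂ) (u : Fin n → ℕ) : ℂ :=
  ∏ i, ∏ k ∈ (Finset.range (u i)).filter (fun k : ℕ => v i - (k : ℂ) ≠ 0), (v i - (k : ℂ))

/-- The polynomial `[v + s b]_u = ∏_i ∏_{k=0}^{u_i - 1} (v_i - k + s b_i)` in `ℂ[s]`. -/
noncomputable def pertFF {n : ℕ} (v b : Fin n → ℂ) (u : Fin n → ℕ) : Polynomial ℂ :=
  ∏ i, ∏ k ∈ Finset.range (u i),
    (Polynomial.C (v i - (k : ℂ)) + Polynomial.C (b i) * Polynomial.X)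

/-!
Over a domain, the order at `s = 0` of a product of linear factors `a + c s` with `c ≠ 0` is the
number of factors with `a = 0`. Hence `ord_s [z + s c]_w` is `1` when `z` is an integer in `[0, w)`
and `0` otherwise, and both sides of the identity split as sums over the coordinates. In a
coordinate where `v_i` is not an integer every term vanishes; where `v_i = m ∈ ℤ`, with
`p = u_i` and `q = u'_i`, the identity becomes
`[0 ≤ m < -p] + [0 ≤ m + p < q] - [0 ≤ m + p < p] = [m + p < 0 ∨ m + p - q < 0] - [m < 0]`,
a statement of linear integer arithmetic.
-/

open Polynomial Finset

namespace Polynomial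

variable {R : Type*} [CommSemiring R]

theorem C_add_C_mul_X_ne_zero (a : R) {c : R} (hc : c ≠ 0) : C a + C c * X ≠ 0 := fun h =>
  hc (by simpa using congrArg (coeff · 1) h)

theorem natTrailingDegree_C_add_C_mul_X (a : R) {c : R} (hc : c ≠ 0) :
    (C a + C c * X).natTrailingDegree = if a = 0 then 1 else 0 := by
  split_ifs with ha
  · simpa [ha] using natTrailingDegree_mul_X_pow (p := C c) (by simpa using hc) 1
  · exact natTrailingDegree_eq_zero.2 (Or.inr (by simpa using ha))

theorem natTrailingDegree_prod [NoZeroDivisors R] [Nontrivial R] {ι : Type*} (s : Finset ι)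
    (f : ι → R[X]) (hf : ∀ i ∈ s, f i ≠ 0) :
    (∏ i ∈ s, f i).natTrailingDegree = ∑ i ∈ s, (f i).natTrailingDegree := by
  induction s using Finset.induction with
  | empty => simp
  | insert a s ha ih =>
    rw [prod_insert ha, sum_insert ha, natTrailingDegree_mul (hf a (mem_insert_self a s))
      (prod_ne_zero_iff.2 fun i hi => hf i (mem_insert_of_mem hi)),
      ih fun i hi => hf i (mem_insert_of_mem hi)]

theorem natTrailingDegree_prod_C_add_C_mul_X [NoZeroDivisors R] [Nontrivial R] {ι : Type*}
    (s : Finset ι) (a : ι → R) {c : R} (hc : c ≠ 0) :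
    (∏ i ∈ s, (C (a i) + C c * X)).natTrailingDegree = #{i ∈ s | a i = 0} := by
  rw [natTrailingDegree_prod _ _ fun i _ => C_add_C_mul_X_ne_zero (a i) hc, card_filter]
  exact sum_congr rfl fun i _ => natTrailingDegree_C_add_C_mul_X (a i) hc

end Polynomial

section

variable {K : Type*} [CommRing K]

/-- `[z + s c]_w`, the one-variable factor of `pertFF`. -/
noncomputable def pertFF₁ (z c : K) (w : ℕ) : K[X] :=
  ∏ k ∈ range w, (C (z - k) + C c * X)

def IsNegInt (z : K) : Prop :=
  ∃ m : ℤ, m < 0 ∧ z = m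

theorem isNegInt_intCast_iff [CharZero K] (m : ℤ) : IsNegInt (m : K) ↔ m < 0 := by
  simp [IsNegInt]

variable [IsDomain K]

theorem pertFF₁_ne_zero (z : K) {c : K} (hc : c ≠ 0) (w : ℕ) : pertFF₁ z c w ≠ 0 :=
  prod_ne_zero_iff.2 fun _ _ => C_add_C_mul_X_ne_zero _ hc

variable [CharZero K]

theorem natTrailingDegree_pertFF₁_intCast (m : ℤ) {c : K} (hc : c ≠ 0) (w : ℕ) :
    (pertFF₁ (m : K) c w).natTrailingDegree = if 0 ≤ m ∧ m < w then 1 else 0 := by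
  rw [pertFF₁, natTrailingDegree_prod_C_add_C_mul_X _ _ hc]
  split_ifs with hm
  · obtain ⟨k, rfl⟩ := Int.eq_ofNat_of_zero_le hm.1
    have hk : k < w := by exact_mod_cast hm.2
    rw [card_eq_one]
    refine ⟨k, ext fun j => ?_⟩
    simp only [Int.cast_natCast, sub_eq_zero, Nat.cast_inj, mem_filter, mem_range, mem_singleton]
    exact ⟨fun h => h.2.symm, fun h => ⟨h ▸ hk, h.symm⟩⟩
  · rw [card_eq_zero, filter_eq_empty_iff]
    intro k hk hmk
    have hmk : m = k := by exact_mod_cast sub_eq_zero.1 hmk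
    have hk : k < w := mem_range.1 hk
    omega

theorem natTrailingDegree_pertFF₁_of_forall_ne_intCast {z : K} (hz : ∀ m : ℤ, z ≠ m) {c : K}
    (hc : c ≠ 0) (w : ℕ) : (pertFF₁ z c w).natTrailingDegree = 0 := by
  rw [pertFF₁, natTrailingDegree_prod_C_add_C_mul_X _ _ hc, card_eq_zero, filter_eq_empty_iff]
  exact fun k _ hzk => hz k (by simpa [sub_eq_zero] using hzk)

theorem ord_critical_term_coord (z : K) {c : K} (hc : c ≠ 0) (p q : ℤ) :
    ((pertFF₁ z c (-p).toNat).natTrailingDegree + (pertFF₁ (z + p) c q.toNat).natTrailingDegree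
        - (pertFF₁ (z + p) c p.toNat).natTrailingDegree : ℤ)
      = (if IsNegInt (z + p) ∨ IsNegInt (z + (p - q : ℤ)) then 1 else 0)
        - if IsNegInt z then 1 else 0 := by
  by_cases hz : ∃ m : ℤ, z = m
  · obtain ⟨m, rfl⟩ := hz
    simp only [← Int.cast_add, natTrailingDegree_pertFF₁_intCast _ hc, isNegInt_intCast_iff]
    split_ifs <;> omega
  · push Not at hz
    have hz_add : ∀ r m : ℤ, z + r ≠ m := fun r m h =>
      hz (m - r) (by push_cast; linear_combination h)
    have not_isNegInt : ∀ r : ℤ, ¬IsNegInt (z + r) := fun r ⟨m, _, h⟩ => hz_add r m h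
    have not_isNegInt_z : ¬IsNegInt z := fun ⟨m, _, h⟩ => hz m h
    simp only [natTrailingDegree_pertFF₁_of_forall_ne_intCast hz hc,
      natTrailingDegree_pertFF₁_of_forall_ne_intCast (hz_add _) hc, not_isNegInt, not_isNegInt_z,
      or_self, if_false]
    rfl

end

section

variable {n : ℕ}

theorem pertFF_eq_prod_pertFF₁ (v b : Fin n → ℂ) (w : Fin n → ℕ) :
    pertFF v b w = ∏ i, pertFF₁ (v i) (b i) (w i) :=
  rfl

theorem nsupp_eq_filter_isNegInt (v : Fin n → ℂ) :
    nsupp v = ({i | IsNegInt (v i)} : Finset (Fin n)) :=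
  rfl

theorem natTrailingDegree_pertFF (v : Fin n → ℂ) {b : Fin n → ℂ} (hb : ∀ j, b j ≠ 0)
    (w : Fin n → ℕ) :
    (pertFF v b w).natTrailingDegree = ∑ i, (pertFF₁ (v i) (b i) (w i)).natTrailingDegree := by
  rw [pertFF_eq_prod_pertFF₁]
  exact natTrailingDegree_prod _ _ fun i _ => pertFF₁_ne_zero _ (hb i) _

theorem pertFF_ne_zero (v : Fin n → ℂ) {b : Fin n → ℂ} (hb : ∀ j, b j ≠ 0)
    (w : Fin n → ℕ) : pertFF v b w ≠ 0 := by
  rw [pertFF_eq_prod_pertFF₁]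
  exact prod_ne_zero_iff.2 fun i _ => pertFF₁_ne_zero _ (hb i) _

theorem card_nsupp (v : Fin n → ℂ) :
    (#(nsupp v) : ℤ) = ∑ i, if IsNegInt (v i) then 1 else 0 :=
  natCast_card_filter _ _

theorem card_nsupp_union (v w : Fin n → ℂ) :
    (#(nsupp v ∪ nsupp w) : ℤ) = ∑ i, if IsNegInt (v i) ∨ IsNegInt (w i) then 1 else 0 := by
  rw [nsupp_eq_filter_isNegInt, nsupp_eq_filter_isNegInt, ← filter_or]
  exact natCast_card_filter _ _

end

theorem ord_critical_term_general {n : ℕ} (v b : Fin n → ℂ) (u u' : Fin n → ℤ)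
    (hb : ∀ j, b j ≠ 0)
    (I₀ I J : Finset (Fin n)) (hI₀ : I₀ = nsupp v)
    (hI : I = nsupp (fun i => v i + ((u i : ℤ) : ℂ)))
    (hJ : J = nsupp (fun i => v i + ((u i - u' i : ℤ) : ℂ))) :
    ((pertFF v b (fun i => (-(u i)).toNat) *
        pertFF (fun i => v i + ((u i : ℤ) : ℂ)) b (fun i => (u' i).toNat)).natTrailingDegree : ℤ) -
      ((pertFF (fun i => v i + ((u i : ℤ) : ℂ)) b (fun i => (u i).toNat)).natTrailingDegree : ℤ)
    = ((I ∪ J).card : ℤ) - (I₀.card : ℤ) := by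
  subst hI₀ hI hJ
  rw [natTrailingDegree_mul (pertFF_ne_zero _ hb _) (pertFF_ne_zero _ hb _),
    natTrailingDegree_pertFF _ hb, natTrailingDegree_pertFF _ hb, natTrailingDegree_pertFF _ hb,
    card_nsupp_union, card_nsupp]
  simp only [Nat.cast_add, Nat.cast_sum]
  rw [← sum_add_distrib, ← sum_sub_distrib, ← sum_sub_distrib]
  exact sum_congr rfl fun i _ => ord_critical_term_coord (v i) (hb i) (u i) (u' i)

/-- order computation of equation (12) in Theorem 5.4: with
`I₀ = nsupp(v)`, `I = nsupp(v+u)`, `J = nsupp(v+u−u')`,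
`ord_s([v+sb]_{u₋}·[v+u+sb]_{u'₊}) − ord_s([v+u+sb]_{u₊}) = |I ∪ J| − |I₀|`. -/
theorem ord_critical_term {n : ℕ} (hn : 0 < n) (v b : Fin n → ℂ) (u u' : Fin n → ℤ)
    (hb : ∀ j, b j ≠ 0)
    (I₀ I J : Finset (Fin n)) (hI₀ : I₀ = nsupp v)
    (hI : I = nsupp (fun i => v i + ((u i : ℤ) : ℂ)))
    (hJ : J = nsupp (fun i => v i + ((u i - u' i : ℤ) : ℂ))) :
    ((pertFF v b (fun i => (-(u i)).toNat) *
        pertFF (fun i => v i + ((u i : ℤ) : ℂ)) b (fun i => (u' i).toNat)).natTrailingDegree : ℤ) -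
      ((pertFF (fun i => v i + ((u i : ℤ) : ℂ)) b (fun i => (u i).toNat)).natTrailingDegree : ℤ)
    = ((I ∪ J).card : ℤ) - (I₀.card : ℤ) :=
  ord_critical_term_general v b u u' hb I₀ I J hI₀ hI hJ
end

section
/- Let v ∈ ℂ^n, let b^{(1)}, …, b^{(l)} ∈ ℂ^n, and let u ∈ ℤ^n. Set I₀ = nsupp(v), I = nsupp(v+u), ℓ_i = Σ_{j=1}^l b_i^{(j)} s_j, and define Q₋ = ∏_{i=1}^n ∏_{k=0}^{(u₋)_i−1} (v_i − k + ℓ_i) and Q₊ = ∏_{i=1}^n ∏_{k=0}^{(u₊)_i−1} (v_i + u_i − k + ℓ_i) in ℂ[s₁,…,s_l]. Then: every homogeneous component of Q₋ of total degree < |I\I₀| is zero and its component of degree |I\I₀| equals [v]^_{u₋} · ∏_{i∈I\I₀} ℓ_i; and every homogeneous component of Q₊ of total degree < |I₀\I| is zero and its component of degree |I₀\I| equals [v+u]^_{u₊} · ∏_{i∈I₀\I} ℓ_i. (Lemma 6.1 (1): the lowest-degree parts of the numerator and denominator of a_u(s) = [v+sb]_{u₋}/[v+sb+u]_{u₊}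 with s·b = s₁b^{(1)}+⋯+s_l b^{(l)}.) -/
open scoped Classical

/-- The linear form `ℓ_i = Σ_j b_i^{(j)} s_j` in `ℂ[s₁,…,s_l]`. -/
noncomputable def ell {n l : ℕ} (b : Fin l → Fin n → ℂ) (i : Fin n) :
    MvPolynomial (Fin l) ℂ :=
  ∑ j, MvPolynomial.C (b j i) * MvPolynomial.X j

/-- The multivariate perturbed falling factorial
`∏_i ∏_{k=0}^{u_i−1} (v_i − k + ℓ_i)` in `ℂ[s₁,…,s_l]`. -/
noncomputable def pertFFmv {n l : ℕ} (v : Fin n → ℂ) (b : Fin l → Fin n → ℂ)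
    (u : Fin n → ℕ) : MvPolynomial (Fin l) ℂ :=
  ∏ i, ∏ k ∈ Finset.range (u i), (MvPolynomial.C (v i - (k : ℂ)) + ell b i)

/-! Over `ℂ`, the factor `v_i - k + ℓ_i` of such a product has constant term `v_i - k`, which
vanishes for at most one `k`, namely `k = v_i`. Pulling out these factors, which are just the
linear forms `ℓ_i`, writes the product as `(∏_{i ∈ J} ℓ_i) · Q` with `Q(0)` the reduced falling
factorial; since `∏_{i ∈ J} ℓ_i` is homogeneous of degree `|J|`, the components of degree `< |J|`
vanish and the one of degree `|J|` is `Q(0) · ∏_{i ∈ J} ℓ_i`. For `Q₋` a factor `v_i - k` with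
`k < (u₋)_i` vanishes iff `v_i ∈ ℕ` and `v_i + u_i` is a negative integer, i.e. iff
`i ∈ I \ I₀`; `Q₊` is the same situation with `(v, u)` replaced by `(v + u, -u)`. -/

open Finset

namespace MvPolynomial

variable {σ R : Type*} [CommSemiring R] {H : MvPolynomial σ R} {d : ℕ}

attribute [local instance] gradedAlgebra

theorem homogeneousComponent_eq_coe_decompose (n : ℕ) (φ : MvPolynomial σ R) :
    homogeneousComponent n φ = DirectSum.decompose (homogeneousSubmodule σ R) φ n :=
  (decomposition.decompose'_apply φ n).symm

theorem homogeneousComponent_mul_of_isHomogeneous_left_of_lt (hH : H.IsHomogeneous d)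
    (Q : MvPolynomial σ R) {m : ℕ} (hm : m < d) : homogeneousComponent m (H * Q) = 0 := by
  rw [homogeneousComponent_eq_coe_decompose]
  exact DirectSum.coe_decompose_mul_of_left_mem_of_not_le _ hH hm.not_ge

theorem homogeneousComponent_mul_of_isHomogeneous_left (hH : H.IsHomogeneous d)
    (Q : MvPolynomial σ R) : homogeneousComponent d (H * Q) = C (constantCoeff Q) * H := by
  rw [homogeneousComponent_eq_coe_decompose,
    DirectSum.coe_decompose_mul_of_left_mem_of_le _ hH le_rfl, Nat.sub_self,
    ← homogeneousComponent_eq_coe_decompose, homogeneousComponent_zero, mul_comm]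
  rfl

end MvPolynomial

theorem prod_range_sub_natCast_eq_ite_mul {R M : Type*} [AddGroupWithOne R] [CharZero R]
    [CommMonoid M] (f : R → M) (x : R) (N : ℕ) :
    ∏ k ∈ range N, f (x - k) =
      (if ∃ k < N, x = k then f 0 else 1) *
        ∏ k ∈ (range N).filter (fun k : ℕ => x - k ≠ 0), f (x - k) := by
  rw [← prod_filter_mul_prod_filter_not (range N) (fun k : ℕ => x - k = 0)]
  congr 1
  split_ifs with hx
  · obtain ⟨k, hkN, rfl⟩ := hx
    have hroot : (range N).filter (fun j : ℕ => (k : R) - j = 0) = {k} := by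
      ext j
      simpa [sub_eq_zero, eq_comm] using fun h => h ▸ hkN
    simp [hroot]
  · refine prod_eq_one fun k hk => absurd ?_ hx
    simp only [mem_filter, mem_range, sub_eq_zero] at hk
    exact ⟨k, hk⟩

section PerturbedFallingFactorial

variable {n l : ℕ} (v : Fin n → ℂ) (b : Fin l → Fin n → ℂ) (w : Fin n → ℕ)

theorem ell_isHomogeneous (i : Fin n) : (ell b i).IsHomogeneous 1 :=
  MvPolynomial.IsHomogeneous.sum _ _ _ fun _ _ => MvPolynomial.isHomogeneous_C_mul_X _ _

theorem constantCoeff_ell (i : Fin n) : MvPolynomial.constantCoeff (ell b i) = 0 := by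
  simp [ell]

noncomputable def redPertFFmv : MvPolynomial (Fin l) ℂ :=
  ∏ i, ∏ k ∈ (range (w i)).filter (fun k : ℕ => v i - k ≠ 0),
    (MvPolynomial.C (v i - k) + ell b i)

theorem constantCoeff_redPertFFmv :
    MvPolynomial.constantCoeff (redPertFFmv v b w) = redffall v w := by
  simp [redPertFFmv, redffall, map_prod, constantCoeff_ell]

theorem pertFFmv_eq_prod_ell_mul_redPertFFmv {J : Finset (Fin n)}
    (hJ : ∀ i, i ∈ J ↔ ∃ k < w i, v i = k) :
    pertFFmv v b w = (∏ i ∈ J, ell b i) * redPertFFmv v b w := by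
  rw [pertFFmv, redPertFFmv, ← univ_inter J, ← prod_ite_mem, ← prod_mul_distrib]
  refine prod_congr rfl fun i _ => ?_
  have h := prod_range_sub_natCast_eq_ite_mul (fun y => MvPolynomial.C y + ell b i) (v i) (w i)
  simp only [map_zero, zero_add] at h
  simp only [h, hJ]

theorem homogeneousComponent_pertFFmv {J : Finset (Fin n)}
    (hJ : ∀ i, i ∈ J ↔ ∃ k < w i, v i = k) :
    (∀ m < J.card, MvPolynomial.homogeneousComponent m (pertFFmv v b w) = 0) ∧
      MvPolynomial.homogeneousComponent J.card (pertFFmv v b w) =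
        MvPolynomial.C (redffall v w) * ∏ i ∈ J, ell b i := by
  have hH : (∏ i ∈ J, ell b i).IsHomogeneous J.card := by
    simpa using MvPolynomial.IsHomogeneous.prod J _ _ fun i _ => ell_isHomogeneous b i
  rw [pertFFmv_eq_prod_ell_mul_redPertFFmv v b w hJ]
  refine ⟨fun m hm => MvPolynomial.homogeneousComponent_mul_of_isHomogeneous_left_of_lt hH _ hm,
    ?_⟩
  rw [MvPolynomial.homogeneousComponent_mul_of_isHomogeneous_left hH, constantCoeff_redPertFFmv]

end PerturbedFallingFactorial

theorem mem_nsupp {n : ℕ} {v : Fin n → ℂ} {i : Fin n} :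
    i ∈ nsupp v ↔ ∃ m : ℤ, m < 0 ∧ v i = m := by
  simp [nsupp]

theorem exists_natCast_lt_toNat_neg_iff (x : ℂ) (z : ℤ) :
    (∃ k < (-z).toNat, x = k) ↔
      (∃ m : ℤ, m < 0 ∧ x + z = m) ∧ ¬∃ m : ℤ, m < 0 ∧ x = m := by
  constructor
  · rintro ⟨k, hk, rfl⟩
    refine ⟨⟨k + z, by omega, by push_cast; ring⟩, ?_⟩
    rintro ⟨m, hm, hkm⟩
    have : (k : ℤ) = m := by exact_mod_cast hkm
    omega
  · rintro ⟨⟨m, hm, hxm⟩, hx⟩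
    have hx_int : x = ((m - z : ℤ) : ℂ) := by push_cast; linear_combination hxm
    have hmz : 0 ≤ m - z := not_lt.mp fun hlt => hx ⟨m - z, hlt, hx_int⟩
    refine ⟨(m - z).toNat, by omega, ?_⟩
    rw [hx_int]
    exact_mod_cast (Int.toNat_of_nonneg hmz).symm

theorem pertFFmv_num_den_lowest_components_general {n l : ℕ}
    (v : Fin n → ℂ) (b : Fin l → Fin n → ℂ) (u : Fin n → ℤ)
    (I₀ I : Finset (Fin n)) (hI₀ : I₀ = nsupp v)
    (hI : I = nsupp (fun i => v i + ((u i : ℤ) : ℂ))) :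
    ((∀ m < (I \ I₀).card,
        MvPolynomial.homogeneousComponent m (pertFFmv v b (fun i => (-(u i)).toNat)) = 0) ∧
      MvPolynomial.homogeneousComponent (I \ I₀).card
          (pertFFmv v b (fun i => (-(u i)).toNat)) =
        MvPolynomial.C (redffall v (fun i => (-(u i)).toNat)) * ∏ i ∈ I \ I₀, ell b i) ∧
    ((∀ m < (I₀ \ I).card,
        MvPolynomial.homogeneousComponent m
          (pertFFmv (fun i => v i + ((u i : ℤ) : ℂ)) b (fun i => (u i).toNat)) = 0) ∧
      MvPolynomial.homogeneousComponent (I₀ \ I).card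
          (pertFFmv (fun i => v i + ((u i : ℤ) : ℂ)) b (fun i => (u i).toNat)) =
        MvPolynomial.C
            (redffall (fun i => v i + ((u i : ℤ) : ℂ)) (fun i => (u i).toNat)) *
          ∏ i ∈ I₀ \ I, ell b i) := by
  subst hI₀ hI
  refine ⟨homogeneousComponent_pertFFmv _ _ _ fun i => ?_,
    homogeneousComponent_pertFFmv _ _ _ fun i => ?_⟩
  · simp only [mem_sdiff, mem_nsupp]
    exact (exists_natCast_lt_toNat_neg_iff (v i) (u i)).symm
  · simpa [mem_sdiff, mem_nsupp] using
      (exists_natCast_lt_toNat_neg_iff (v i + u i) (-u i)).symm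

/-- Lemma 6.1 (1): with `I₀ = nsupp(v)`, `I = nsupp(v+u)`,
the lowest-degree parts of `Q₋ = [v+sb]_{u₋}` and `Q₊ = [v+sb+u]_{u₊}` (with
`s·b = s₁b^{(1)}+⋯+s_l b^{(l)}`) are `[v]^_{u₋}·∏_{i∈I\I₀} ℓ_i` in degree `|I\I₀|`
and `[v+u]^_{u₊}·∏_{i∈I₀\I} ℓ_i` in degree `|I₀\I|`, respectively. -/
theorem pertFFmv_num_den_lowest_components {n l : ℕ} (hn : 0 < n) (hl : 0 < l)
    (v : Fin n → ℂ) (b : Fin l → Fin n → ℂ) (u : Fin n → ℤ)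
    (I₀ I : Finset (Fin n)) (hI₀ : I₀ = nsupp v)
    (hI : I = nsupp (fun i => v i + ((u i : ℤ) : ℂ))) :
    ((∀ m < (I \ I₀).card,
        MvPolynomial.homogeneousComponent m (pertFFmv v b (fun i => (-(u i)).toNat)) = 0) ∧
      MvPolynomial.homogeneousComponent (I \ I₀).card
          (pertFFmv v b (fun i => (-(u i)).toNat)) =
        MvPolynomial.C (redffall v (fun i => (-(u i)).toNat)) * ∏ i ∈ I \ I₀, ell b i) ∧
    ((∀ m < (I₀ \ I).card,
        MvPolynomial.homogeneousComponent m
          (pertFFmv (fun i => v i + ((u i : ℤ) : ℂ)) b (fun i => (u i).toNat)) = 0) ∧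
      MvPolynomial.homogeneousComponent (I₀ \ I).card
          (pertFFmv (fun i => v i + ((u i : ℤ) : ℂ)) b (fun i => (u i).toNat)) =
        MvPolynomial.C
            (redffall (fun i => v i + ((u i : ℤ) : ℂ)) (fun i => (u i).toNat)) *
          ∏ i ∈ I₀ \ I, ell b i) :=
  pertFFmv_num_den_lowest_components_general v b u I₀ I hI₀ hI
end
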